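/- For every q > 1, the set {λ > 0 : h_q(λ) = 1} is nonempty and has a least element λ₀(q), which satisfies 3/2 < λ₀(q) < e. Moreover, q ↦ λ₀(q) is increasing on (1,∞), and λ₀(q) → e as q → ∞. -/

import Mathlib

/-- `h_q(λ) := λ e^{−λ/e} (√(4 + e^{−2λ/e}) − e^{−λ/e})^{1/q} / (2^{1/q}(1 − e^{−λ/e})^{1/(2q)})`. -/
noncomputable def hFun (q lam : ℝ) : ℝ :=
  lam * Real.exp (-(lam / Real.exp 1)) *
    ((Real.sqrt (4 + Real.exp (-(2 * lam / Real.exp 1))) - Real.exp (-(lam / Real.exp 1))) ^ (1 / q)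
      / ((2:ℝ) ^ (1 / q) * (1 - Real.exp (-(lam / Real.exp 1))) ^ (1 / (2 * q))))

/-!
Write `u = e^{-λ/e}` and `B(λ) = (√(4 + u²) - u) / (2√(1 - u))`, so that
`h_q(λ) = λ u B(λ)^{1/q}` with `B > 1`; hence `h_q(λ)` decreases strictly in `q`. In particular
`h_q < h_1` for `q > 1`, and `log h_1(λ) = log λ - λ/e - arsinh (u/2) - log (1 - u) / 2` has
positive derivative on `(0, 3/2]`, so `h_1 ≤ h_1(3/2) < 1` there (the last inequality is a
numerical check with little room): every root of `h_q = 1` exceeds `3/2`. Since `e u(e) = 1`, `h_q(e) = B(e)^{1/q} > 1`, and the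
intermediate value theorem gives a root below `e`; the roots form a closed set, so there is a least
one. A larger `q` lowers `h_q`, which pushes the least root to the right. Finally `λ u < 1` for
`λ ≠ e`, while `B^{1/q} → 1` uniformly on compact subsets of `(0, ∞)`, so for every `c < e`
eventually `h_q < 1` on `[3/2, c]`.
-/

namespace HFun

open Real Set Filter Topology

noncomputable def decay (lam : ℝ) : ℝ := exp (-(lam / exp 1))

noncomputable def base (lam : ℝ) : ℝ :=
  (√(4 + decay lam ^ 2) - decay lam) / (2 * √(1 - decay lam))

lemma decay_pos (lam : ℝ) : 0 < decay lam := exp_pos _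

lemma decay_lt_one {lam : ℝ} (h : 0 < lam) : decay lam < 1 :=
  exp_lt_one_iff.2 (neg_neg_of_pos (div_pos h (exp_pos 1)))

lemma continuous_decay : Continuous decay := by
  unfold decay; fun_prop

lemma mul_decay_div_exp_one_le_one_sub (lam : ℝ) : lam * decay lam / exp 1 ≤ 1 - decay lam := by
  have h := mul_le_mul_of_nonneg_left (add_one_le_exp (lam / exp 1)) (decay_pos lam).le
  have hinv : decay lam * exp (lam / exp 1) = 1 := by
    rw [decay, ← exp_add, neg_add_cancel, exp_zero]
  linarith [show decay lam * (lam / exp 1 + 1) = lam * decay lam / exp 1 + decay lam by ring]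

lemma exp_one_mul_decay : exp 1 * decay (exp 1) = 1 := by
  rw [decay, div_self (exp_pos 1).ne', ← exp_add, add_neg_cancel, exp_zero]

lemma mul_decay_lt_one {lam : ℝ} (h : lam ≠ exp 1) : lam * decay lam < 1 := by
  have key := add_one_lt_exp (x := lam / exp 1 - 1) (by
    rwa [sub_ne_zero, ne_eq, div_eq_one_iff_eq (exp_pos 1).ne'])
  rw [sub_add_cancel, exp_sub, lt_div_iff₀ (exp_pos 1), div_mul_cancel₀ _ (exp_pos 1).ne']
    at key
  rw [decay, exp_neg, ← div_eq_mul_inv, div_lt_one (exp_pos _)]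
  exact key

lemma sqrt_four_add_sq_sub (x : ℝ) : √(4 + x ^ 2) - x = 2 * exp (-arsinh (x / 2)) := by
  have hs : √(4 + x ^ 2) = 2 * √(1 + (x / 2) ^ 2) := by
    rw [show 4 + x ^ 2 = 2 ^ 2 * (1 + (x / 2) ^ 2) by ring, sqrt_mul (by norm_num),
      sqrt_sq (by norm_num)]
  rw [exp_neg, exp_arsinh, hs, ← div_eq_mul_inv,
    eq_div_iff (exp_arsinh (x / 2) ▸ (exp_pos _).ne')]
  nlinarith [sq_sqrt (by positivity : (0:ℝ) ≤ 1 + (x / 2) ^ 2)]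

lemma one_lt_base {lam : ℝ} (h : 0 < lam) : 1 < base lam := by
  set u := decay lam
  have hu0 : 0 < u := decay_pos lam
  have hu1 : u < 1 := decay_lt_one h
  have hs2 : √(4 + u ^ 2) ^ 2 = 4 + u ^ 2 := sq_sqrt (by positivity)
  have ht2 : √(1 - u) ^ 2 = 1 - u := sq_sqrt (by linarith)
  have ht : 0 < √(1 - u) := sqrt_pos.2 (by linarith)
  have hs : 2 ≤ √(4 + u ^ 2) := le_sqrt_of_sq_le (by nlinarith)
  rw [base, one_lt_div (by positivity)]
  nlinarith

lemma hFun_eq_mul_base_rpow {q lam : ℝ} (hl : 0 < lam) :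
    hFun q lam = lam * decay lam * base lam ^ (1 / q) := by
  have hu1 : 0 < 1 - decay lam := by linarith [decay_lt_one hl]
  have hN : 0 ≤ √(4 + decay lam ^ 2) - decay lam := by
    nlinarith [sqrt_le_sqrt (by nlinarith : decay lam ^ 2 ≤ 4 + decay lam ^ 2),
      sqrt_sq (decay_pos lam).le]
  have h2 : exp (-(2 * lam / exp 1)) = decay lam ^ 2 := by
    rw [decay, ← exp_nat_mul]; ring_nf
  have h3 : (1 - decay lam) ^ (1 / (2 * q)) = √(1 - decay lam) ^ (1 / q) := by
    rw [sqrt_eq_rpow, ← rpow_mul hu1.le]; ring_nf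
  rw [hFun, base, ← decay, h2, h3, div_rpow hN (by positivity),
    mul_rpow (by norm_num) (sqrt_nonneg _)]

lemma hFun_lt_hFun_of_lt {q q' lam : ℝ} (hl : 0 < lam) (hq : 0 < q) (hqq' : q < q') :
    hFun q' lam < hFun q lam := by
  rw [hFun_eq_mul_base_rpow hl, hFun_eq_mul_base_rpow hl]
  exact mul_lt_mul_of_pos_left
    (rpow_lt_rpow_of_exponent_lt (one_lt_base hl) (one_div_lt_one_div_of_lt hq hqq'))
    (mul_pos hl (decay_pos lam))

noncomputable def logHFunOne (lam : ℝ) : ℝ :=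
  log lam - lam / exp 1 - arsinh (decay lam / 2) - log (1 - decay lam) / 2

lemma hFun_one_eq_exp {lam : ℝ} (hl : 0 < lam) : hFun 1 lam = exp (logHFunOne lam) := by
  have hu1 : 0 < 1 - decay lam := by linarith [decay_lt_one hl]
  have hsqrt : √(1 - decay lam) = exp (log (1 - decay lam) / 2) := by
    rw [sqrt_eq_rpow, rpow_def_of_pos hu1]
    ring_nf
  rw [hFun_eq_mul_base_rpow hl, div_one, rpow_one, base, sqrt_four_add_sq_sub, hsqrt,
    logHFunOne, exp_sub, exp_sub, exp_sub, exp_log hl, decay, exp_neg, exp_neg]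
  field_simp

lemma hasDerivAt_decay (lam : ℝ) : HasDerivAt decay (-(decay lam / exp 1)) lam := by
  have h : HasDerivAt (fun x => -(x / exp 1)) (-(1 / exp 1)) lam :=
    ((hasDerivAt_id' lam).div_const _).neg
  convert h.exp using 1
  · rfl
  · rw [decay]
    ring

lemma hasDerivAt_logHFunOne {lam : ℝ} (hl : 0 < lam) :
    HasDerivAt logHFunOne
      (lam⁻¹ - 1 / exp 1 - (√(1 + (decay lam / 2) ^ 2))⁻¹ * (-(decay lam / exp 1) / 2)
        - (-(-(decay lam / exp 1)) / (1 - decay lam)) / 2) lam := by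
  have hu1 : 1 - decay lam ≠ 0 := by linarith [decay_lt_one hl]
  have hd := hasDerivAt_decay lam
  exact ((((hasDerivAt_log hl.ne').sub ((hasDerivAt_id lam).div_const (exp 1))).sub
    (hd.div_const 2).arsinh).sub (((hd.const_sub 1).log hu1).div_const 2))

lemma logHFunOne_deriv_pos {lam : ℝ} (hl : 0 < lam) (h32 : lam ≤ 3 / 2) :
    0 < lam⁻¹ - 1 / exp 1 - (√(1 + (decay lam / 2) ^ 2))⁻¹ * (-(decay lam / exp 1) / 2)
        - (-(-(decay lam / exp 1)) / (1 - decay lam)) / 2 := by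
  set u := decay lam
  set s := √(1 + (u / 2) ^ 2)
  have he : 2.7182818283 < exp 1 := exp_one_gt_d9
  have he' : exp 1 < 2.7182818286 := exp_one_lt_d9
  have hu1 : 0 < 1 - u := by linarith [decay_lt_one hl]
  have hs0 : 0 < s := sqrt_pos.2 (by positivity)
  have hs : s ≤ 6 / 5 :=
    sqrt_le_iff.2 ⟨by norm_num, by nlinarith [decay_lt_one hl, decay_pos lam]⟩
  -- `1 - λ/e ≤ e^{-λ/e}` keeps `u` away from `0` on `(0, 3/2]`
  have hu : 2 / 5 ≤ u := by
    have := add_one_le_exp (-(lam / exp 1))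
    have : lam / exp 1 ≤ 3 / 5 := by rw [div_le_iff₀ (by positivity)]; linarith
    change _ ≤ exp _; linarith
  have hsingular : u / exp 1 / (1 - u) ≤ lam⁻¹ := by
    rw [div_le_iff₀ hu1, inv_mul_eq_div, le_div_iff₀ hl]
    linarith [mul_decay_div_exp_one_le_one_sub lam, show u / exp 1 * lam = lam * u / exp 1 by ring]
  have hinv : 1 / exp 1 < 0.3679 := by rw [div_lt_iff₀ (by positivity)]; linarith
  have hlam : 2 / 3 ≤ lam⁻¹ := by rw [le_inv_comm₀ (by norm_num) hl]; linarith
  have hgain : 0.06 ≤ s⁻¹ * (u / exp 1 / 2) := by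
    rw [inv_mul_eq_div, le_div_iff₀ hs0, div_div, le_div_iff₀ (by positivity)]
    nlinarith
  have hexpr : lam⁻¹ - 1 / exp 1 - s⁻¹ * (-(u / exp 1) / 2) - (-(-(u / exp 1)) / (1 - u)) / 2
      = lam⁻¹ - 1 / exp 1 + s⁻¹ * (u / exp 1 / 2) - u / exp 1 / (1 - u) / 2 := by ring
  rw [hexpr]
  linarith

lemma strictMonoOn_logHFunOne : StrictMonoOn logHFunOne (Ioc 0 (3 / 2)) := by
  apply strictMonoOn_of_deriv_pos (convex_Ioc 0 (3 / 2))
  · exact fun x hx => (hasDerivAt_logHFunOne hx.1).continuousAt.continuousWithinAt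
  · intro x hx
    rw [interior_Ioc] at hx
    rw [(hasDerivAt_logHFunOne hx.1).deriv]
    exact logHFunOne_deriv_pos hx.1 hx.2.le

lemma hFun_one_le_hFun_one_three_halves {lam : ℝ} (hl : 0 < lam) (h32 : lam ≤ 3 / 2) :
    hFun 1 lam ≤ hFun 1 (3 / 2) := by
  rw [hFun_one_eq_exp hl, hFun_one_eq_exp (by norm_num)]
  exact exp_le_exp.2
    (strictMonoOn_logHFunOne.monotoneOn ⟨hl, h32⟩ ⟨by norm_num, le_rfl⟩ h32)

lemma decay_three_halves_le : decay (3 / 2) ≤ 0.576 := by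
  have hy : (3 / 2) / 2.7182818286 ≤ (3 / 2) / exp 1 :=
    div_le_div_of_nonneg_left (by norm_num) (exp_pos 1) exp_one_lt_d9.le
  have hexp := (sum_le_exp_of_nonneg (by norm_num : (0:ℝ) ≤ (3 / 2) / 2.7182818286) 6).trans
    (exp_le_exp.2 hy)
  have htaylor :
      1 / 0.576 ≤ ∑ i ∈ Finset.range 6, ((3 / 2) / 2.7182818286 : ℝ) ^ i / i.factorial := by
    simp only [Finset.sum_range_succ, Finset.sum_range_zero, Nat.factorial]
    norm_num
  rw [decay, exp_neg, inv_le_comm₀ (exp_pos _) (by norm_num)]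
  linarith

-- `decay (3 / 2) ≈ 0.5759`, while the inequality fails from `u ≈ 0.5765` on.
lemma three_mul_lt_sqrt_mul {u : ℝ} (h0 : 0 < u) (h : u ≤ 0.576) :
    3 * u < √(1 - u) * (√(4 + u ^ 2) + u) := by
  have ht : 0.6511 ≤ √(1 - u) := le_sqrt_of_sq_le (by linarith)
  have hs : 3.613 * u ≤ √(4 + u ^ 2) := le_sqrt_of_sq_le (by nlinarith)
  nlinarith

lemma hFun_one_lt_one_of_lt {lam : ℝ} (hl : 0 < lam)
    (h : 2 * lam * decay lam < √(1 - decay lam) * (√(4 + decay lam ^ 2) + decay lam)) :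
    hFun 1 lam < 1 := by
  rw [hFun_eq_mul_base_rpow hl, div_one, rpow_one, base]
  set u := decay lam
  have hu0 : 0 < u := decay_pos lam
  have ht : 0 < √(1 - u) := sqrt_pos.2 (by linarith [decay_lt_one hl])
  have hs2 : √(4 + u ^ 2) ^ 2 = 4 + u ^ 2 := sq_sqrt (by positivity)
  have hs : 0 ≤ √(4 + u ^ 2) := sqrt_nonneg _
  rw [mul_div_assoc', div_lt_one (by positivity)]
  refine lt_of_mul_lt_mul_right ?_ (add_pos_of_nonneg_of_pos hs hu0).le
  calc lam * u * (√(4 + u ^ 2) - u) * (√(4 + u ^ 2) + u) = 2 * (2 * lam * u) := by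
        linear_combination lam * u * hs2
    _ < 2 * √(1 - u) * (√(4 + u ^ 2) + u) := by linarith

lemma hFun_lt_one_of_le_three_halves {q lam : ℝ} (hq : 1 < q) (hl : 0 < lam)
    (h32 : lam ≤ 3 / 2) : hFun q lam < 1 := by
  have hu := three_mul_lt_sqrt_mul (decay_pos (3 / 2)) decay_three_halves_le
  calc hFun q lam < hFun 1 lam := hFun_lt_hFun_of_lt hl one_pos hq
    _ ≤ hFun 1 (3 / 2) := hFun_one_le_hFun_one_three_halves hl h32
    _ < 1 := hFun_one_lt_one_of_lt (by norm_num) (by linarith)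

lemma continuousOn_hFun (q : ℝ) : ContinuousOn (hFun q) (Ioi 0) := by
  intro lam hl
  have hu : exp (-(lam / exp 1)) < 1 := decay_lt_one hl
  have hN : 0 < √(4 + exp (-(2 * lam / exp 1))) - exp (-(lam / exp 1)) :=
    sub_pos.2 ((lt_sqrt (exp_pos _).le).2
      (by nlinarith [exp_pos (-(2 * lam / exp 1)), exp_pos (-(lam / exp 1))]))
  apply ContinuousAt.continuousWithinAt
  unfold hFun
  fun_prop (disch := first | positivity | exact Or.inl hN.ne' | exact Or.inl (sub_pos.2 hu).ne')

lemma continuousOn_base : ContinuousOn base (Ioi 0) := by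
  intro lam hl
  have ht : √(1 - decay lam) ≠ 0 := (sqrt_pos.2 (sub_pos.2 (decay_lt_one hl))).ne'
  apply ContinuousAt.continuousWithinAt
  unfold base
  have := continuous_decay
  fun_prop (disch := exact mul_ne_zero two_ne_zero ht)

lemma one_lt_hFun_exp_one {q : ℝ} (hq : 0 < q) : 1 < hFun q (exp 1) := by
  rw [hFun_eq_mul_base_rpow (exp_pos 1), exp_one_mul_decay, one_mul]
  exact one_lt_rpow (one_lt_base (exp_pos 1)) (one_div_pos.2 hq)

lemma exists_mem_Ioo_hFun_eq_one {q b : ℝ} (hq : 1 < q) (hb : 3 / 2 < b) (hfb : 1 < hFun q b) :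
    ∃ lam ∈ Ioo (3 / 2) b, hFun q lam = 1 :=
  intermediate_value_Ioo hb.le ((continuousOn_hFun q).mono fun _ hx => by
      simp only [mem_Ioi]; linarith [hx.1])
    ⟨hFun_lt_one_of_le_three_halves hq (by norm_num) le_rfl, hfb⟩

lemma three_halves_lt_of_hFun_eq_one {q lam : ℝ} (hq : 1 < q) (hl : 0 < lam)
    (h : hFun q lam = 1) : 3 / 2 < lam :=
  not_le.1 fun h32 => (hFun_lt_one_of_le_three_halves hq hl h32).ne h

lemma exists_isLeast_hFun_eq_one {q : ℝ} (hq : 1 < q) :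
    ∃ lam0, IsLeast {lam : ℝ | 0 < lam ∧ hFun q lam = 1} lam0 := by
  obtain ⟨x, hx, hx1⟩ := exists_mem_Ioo_hFun_eq_one hq (by linarith [exp_one_gt_d9])
    (one_lt_hFun_exp_one (by linarith))
  have hset : {lam : ℝ | 0 < lam ∧ hFun q lam = 1} = Ici (3 / 2) ∩ hFun q ⁻¹' {1} := by
    ext lam
    exact ⟨fun h => ⟨(three_halves_lt_of_hFun_eq_one hq h.1 h.2).le, h.2⟩,
      fun h => ⟨by linarith [mem_Ici.1 h.1], h.2⟩⟩
  have hclosed : IsClosed {lam : ℝ | 0 < lam ∧ hFun q lam = 1} := by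
    rw [hset]
    exact ((continuousOn_hFun q).mono fun _ h => by simp only [mem_Ioi]; linarith [mem_Ici.1 h])
      |>.preimage_isClosed_of_isClosed isClosed_Ici isClosed_singleton
  exact ⟨_, hclosed.isLeast_csInf ⟨x, by linarith [hx.1], hx1⟩
    ⟨3 / 2, fun _ h => (three_halves_lt_of_hFun_eq_one hq h.1 h.2).le⟩⟩

lemma mem_Ioo_of_isLeast {q lam0 : ℝ} (hq : 1 < q)
    (h : IsLeast {lam : ℝ | 0 < lam ∧ hFun q lam = 1} lam0) : lam0 ∈ Ioo (3 / 2) (exp 1) := by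
  obtain ⟨x, hx, hx1⟩ := exists_mem_Ioo_hFun_eq_one hq (by linarith [exp_one_gt_d9])
    (one_lt_hFun_exp_one (by linarith))
  exact ⟨three_halves_lt_of_hFun_eq_one hq h.1.1 h.1.2,
    (h.2 ⟨by linarith [hx.1], hx1⟩).trans_lt hx.2⟩

lemma lt_of_isLeast_of_isLeast {q q' m m' : ℝ} (hq : 1 < q) (hqq' : q < q')
    (hm : IsLeast {lam : ℝ | 0 < lam ∧ hFun q lam = 1} m)
    (hm' : IsLeast {lam : ℝ | 0 < lam ∧ hFun q' lam = 1} m') : m < m' := by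
  have hq' : 1 < q' := hq.trans hqq'
  have hbig : 1 < hFun q m' := hm'.1.2 ▸ hFun_lt_hFun_of_lt hm'.1.1 (by linarith) hqq'
  obtain ⟨x, hx, hx1⟩ :=
    exists_mem_Ioo_hFun_eq_one hq (three_halves_lt_of_hFun_eq_one hq' hm'.1.1 hm'.1.2) hbig
  exact (hm.2 ⟨by linarith [hx.1], hx1⟩).trans_lt hx.2

lemma eventually_hFun_lt_one_on_Icc {a c : ℝ} (ha : 0 < a) (hac : a ≤ c) (hc : c < exp 1) :
    ∀ᶠ q in atTop, ∀ lam ∈ Icc a c, hFun q lam < 1 := by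
  have hpos : Icc a c ⊆ Ioi 0 := fun _ h => lt_of_lt_of_le ha h.1
  obtain ⟨x, hx, hxmax⟩ := isCompact_Icc.exists_isMaxOn (f := fun y => y * decay y)
    (nonempty_Icc.2 hac) (continuous_id.mul continuous_decay).continuousOn
  obtain ⟨C, hC⟩ := isCompact_Icc.bddAbove_image (continuousOn_base.mono hpos)
  have hK : x * decay x < 1 := mul_decay_lt_one (by linarith [hx.2])
  have hC0 : 0 < C := by linarith [one_lt_base (hpos hx), hC ⟨x, hx, rfl⟩]
  have hlim : Tendsto (fun q : ℝ => x * decay x * C ^ (1 / q)) atTop (𝓝 (x * decay x)) := by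
    have h := (tendsto_const_nhds (x := C)).rpow
      ((tendsto_const_nhds (x := (1:ℝ))).div_atTop tendsto_id) (Or.inl hC0.ne')
    simpa using h.const_mul (x * decay x)
  filter_upwards [hlim.eventually_lt_const hK, eventually_gt_atTop 0] with q hq hq0 lam hlam
  have hbase : 0 < base lam := zero_lt_one.trans (one_lt_base (hpos hlam))
  rw [hFun_eq_mul_base_rpow (hpos hlam)]
  calc lam * decay lam * base lam ^ (1 / q) ≤ x * decay x * C ^ (1 / q) :=
        mul_le_mul (hxmax hlam) (rpow_le_rpow hbase.le (hC ⟨lam, hlam, rfl⟩) (by positivity))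
          (by positivity) (mul_pos (hpos hx) (decay_pos x)).le
    _ < 1 := hq

end HFun

open HFun in
/-- For every `q > 1` the set `{λ > 0 : h_q(λ) = 1}` has a least element
`λ₀(q)`, which satisfies `3/2 < λ₀(q) < e`; moreover `q ↦ λ₀(q)` is increasing on `(1,∞)`
and tends to `e` as `q → ∞`. -/
theorem stmt_13 :
    (∀ q : ℝ, 1 < q → ∃ lam0 : ℝ, IsLeast {lam : ℝ | 0 < lam ∧ hFun q lam = 1} lam0) ∧
    ∀ L : ℝ → ℝ, (∀ q : ℝ, 1 < q → IsLeast {lam : ℝ | 0 < lam ∧ hFun q lam = 1} (L q)) →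
      (∀ q : ℝ, 1 < q → 3 / 2 < L q ∧ L q < Real.exp 1) ∧
      StrictMonoOn L (Set.Ioi 1) ∧
      Filter.Tendsto L Filter.atTop (nhds (Real.exp 1)) := by
  refine ⟨fun q hq => exists_isLeast_hFun_eq_one hq, fun L hL => ?_⟩
  have hbounds (q : ℝ) (hq : 1 < q) : L q ∈ Set.Ioo (3 / 2) (Real.exp 1) :=
    mem_Ioo_of_isLeast hq (hL q hq)
  refine ⟨hbounds, fun q hq q' hq' hqq' => lt_of_isLeast_of_isLeast hq hqq' (hL q hq) (hL q' hq'),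
    tendsto_order.2 ⟨fun c hc => ?_, fun c hc => ?_⟩⟩
  · obtain hc32 | hc32 := le_or_gt c (3 / 2)
    · filter_upwards [Filter.eventually_gt_atTop 1] with q hq using hc32.trans_lt (hbounds q hq).1
    · filter_upwards [eventually_hFun_lt_one_on_Icc (by norm_num) hc32.le hc,
        Filter.eventually_gt_atTop 1] with q hlt hq
      exact not_le.1 fun hle => (hlt (L q) ⟨(hbounds q hq).1.le, hle⟩).ne (hL q hq).1.2
  · filter_upwards [Filter.eventually_gt_atTop 1] with q hq using (hbounds q hq).2.trans hc
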